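/- For every dimension type D with n = dim D finite, dim(D ⊞ (n+1 ⊖ D)) ≤ n+1 and n+1 ≤ dim'(D ⊕ (n+1 ⊖ D)) in the sense that (D ⊕ (n+1 ⊖ D))(G) ≥ n+1 for every G in the Bockstein basis, provided dim D > 0. -/

import Mathlib

/-- Decorations: `-`, no decoration, `+`. -/
inductive Dec : Type
  | neg | zero | pos
  deriving DecidableEq

namespace Dec

/-- The product of decorations: `ε⊗0 = ε`, `ε⊗ε = ε`, `+⊗- = -⊗+ = -`. -/
def otimes : Dec → Dec → Dec
  | zero, e => e
  | e, zero => e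
  | pos, pos => pos
  | neg, neg => neg
  | pos, neg => neg
  | neg, pos => neg

/-- The reversal of decorations: `-(+) = -`, `-(-) = +`, `-(0) = 0`. -/
def rev : Dec → Dec
  | pos => neg
  | neg => pos
  | zero => zero

/-- The dual product of decorations, `(ε₁, ε₂) ↦ -((-ε₁)⊗(-ε₂))`. -/
def dual (e₁ e₂ : Dec) : Dec := rev (otimes (rev e₁) (rev e₂))

/-- Numerical value of a decoration, realizing the order `- < 0 < +`. -/
def val : Dec → ℤ
  | neg => -1
  | zero => 0
  | pos => 1

end Dec

/-- A decorated number is a pair `(n, ε)`, `n ∈ ℕ`, `ε` a decoration. -/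
abbrev DecNum : Type := ℕ × Dec

namespace DecNum

/-- The lexicographic order `⋯ < n⁻ < n < n⁺ < (n+1)⁻ < ⋯` on decorated numbers. -/
def dle (a b : DecNum) : Prop := a.1 < b.1 ∨ (a.1 = b.1 ∧ a.2.val ≤ b.2.val)

/-- The addition `⊞` of decorated numbers: `(n,ε₁) ⊞ (m,ε₂) = (n+m, ε₁⊗ε₂)`. -/
def dadd (a b : DecNum) : DecNum := (a.1 + b.1, Dec.otimes a.2 b.2)

/-- The addition `⊕` of decorated numbers: `(n,ε₁) ⊕ (m,ε₂) = (n+m, -((-ε₁)⊗(-ε₂)))`. -/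
def oadd (a b : DecNum) : DecNum := (a.1 + b.1, Dec.dual a.2 b.2)

/-- The complement `(n+1) ⊖ (m,ε) = (n+1-m, -ε)` of a decorated number. -/
def dsub (n : ℕ) (a : DecNum) : DecNum := (n + 1 - a.1, Dec.rev a.2)

end DecNum

/-- A (finite) dimension type is encoded by decorated numbers: an undecorated
value at the index `none` (standing for `ℚ`) and a decorated number at each
prime `p` (the value `D(ℤ_p)` together with the `p`-singularity type as
decoration). -/
abbrev EncDimType : Type := Option Nat.Primes → DecNum

/-- The constraints on the encoding of a dimension type: `D(0) = D(ℚ)` has no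
decoration, `0` has no decoration, and `1` does not have the `-` decoration. -/
def IsEncDimType (D : EncDimType) : Prop :=
  (D none).2 = Dec.zero ∧
  ∀ i : Option Nat.Primes, ((D i).1 = 0 → (D i).2 = Dec.zero) ∧
    ((D i).1 = 1 → (D i).2 ≠ Dec.neg)

/-- The contribution of a decorated value `D(p)` to `dim D = sup{D(G) : G ∈ σ}`
over the whole Bockstein basis: for a `p⁺`-singular `D` one has
`D(ℤ_{(p)}) ≥ D(ℤ_{p^∞}) + 1 = D(ℤ_p) + 1`, otherwise the largest value among
the groups at `p` is `D(ℤ_p)` itself (up to the separately counted `D(ℚ)`). -/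
def contrib (a : DecNum) : ℕ := if a.2 = Dec.pos then a.1 + 1 else a.1

/-- `dim D = n` for an encoded dimension type. -/
def encDimEq (D : EncDimType) (n : ℕ) : Prop :=
  (∀ i, contrib (D i) ≤ n) ∧ (∃ i, contrib (D i) = n)

/-- The pointwise operation `D₁ ⊞ D₂`. -/
def encDadd (D₁ D₂ : EncDimType) : EncDimType := fun i => DecNum.dadd (D₁ i) (D₂ i)

/-- The pointwise operation `D₁ ⊕ D₂`. -/
def encOadd (D₁ D₂ : EncDimType) : EncDimType := fun i => DecNum.oadd (D₁ i) (D₂ i)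

/-- The pointwise complement `n+1 ⊖ D`, `(n+1 ⊖ D)(p) = (n+1−m, −ε)` for
`D(p) = (m, ε)`. -/
def encDsub (n : ℕ) (D : EncDimType) : EncDimType := fun i => DecNum.dsub n (D i)

/-- The pointwise order on encoded dimension types. -/
def encLe (D₁ D₂ : EncDimType) : Prop := ∀ i, DecNum.dle (D₁ i) (D₂ i)

/-- The constant dimension type `n` (every group is sent to `n`, undecorated). -/
def encConst (n : ℕ) : EncDimType := fun _ => (n, Dec.zero)

/-
Pointwise, `m ⊞ (n+1 ⊖ m)` and `m ⊕ (n+1 ⊖ m)` have value exactly `n+1` as soon as `m ≤ n+1`;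
only the decorations differ. Since `ε ⊗ (-ε)` is never `+` and `-((-ε) ⊗ ε)` is never `-`,
the first never contributes more than `n+1` to the dimension and the second never drops
below the undecorated `n+1`.
-/

namespace Dec

theorem otimes_rev_ne_pos (e : Dec) : otimes e (rev e) ≠ pos := by
  cases e <;> decide

theorem val_dual_rev_nonneg (e : Dec) : 0 ≤ (dual e (rev e)).val := by
  cases e <;> decide

end Dec

theorem fst_le_contrib (a : DecNum) : a.1 ≤ contrib a := by
  unfold contrib
  split <;> omega

namespace DecNum

theorem contrib_dadd_dsub {n : ℕ} {a : DecNum} (h : a.1 ≤ n + 1) :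
    contrib (dadd a (dsub n a)) = n + 1 := by
  rw [contrib, dadd, dsub, if_neg (Dec.otimes_rev_ne_pos a.2)]
  exact Nat.add_sub_of_le h

theorem dle_oadd_dsub {n : ℕ} {a : DecNum} (h : a.1 ≤ n + 1) :
    dle (n + 1, Dec.zero) (oadd a (dsub n a)) :=
  Or.inr ⟨by simp only [oadd, dsub]; omega, Dec.val_dual_rev_nonneg a.2⟩

end DecNum

theorem encDimEq.fst_le {D : EncDimType} {n : ℕ} (hdim : encDimEq D n) (i : Option Nat.Primes) :
    (D i).1 ≤ n :=
  (fst_le_contrib (D i)).trans (hdim.1 i)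

theorem encDadd_encOadd_dsub_general (D : EncDimType) (n : ℕ)
    (hdim : encDimEq D n) :
    (∀ i, contrib (encDadd D (encDsub n D) i) ≤ n + 1) ∧
    encLe (encConst (n + 1)) (encOadd D (encDsub n D)) :=
  ⟨fun i => (DecNum.contrib_dadd_dsub (hdim.fst_le i).step).le,
    fun i => DecNum.dle_oadd_dsub (hdim.fst_le i).step⟩

/-- for a dimension type `D` with `0 < dim D = n < ∞`,
`dim (D ⊞ (n+1 ⊖ D)) ≤ n+1` and `(D ⊕ (n+1 ⊖ D))(G) ≥ n+1` for every `G` in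
the Bockstein basis. -/
theorem encDadd_encOadd_dsub (D : EncDimType) (n : ℕ)
    (hD : IsEncDimType D) (hdim : encDimEq D n) (hn : 0 < n) :
    (∀ i, contrib (encDadd D (encDsub n D) i) ≤ n + 1) ∧
    encLe (encConst (n + 1)) (encOadd D (encDsub n D)) :=
  encDadd_encOadd_dsub_general D n hdim
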